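/- For every real t with 0 ≤ t ≤ 1, ∑_{n=0}^∞ t^{2n+1}/(2n+1)³ = ∫₀¹ (arcsin(t·x) · arccos x)/x dx, where the integral is taken over the real interval [0,1]. -/

import Mathlib

/-!
With `c n` the coefficients of the binomial series of `(1 - s)^(-1/2)`, integrating
`1 / √(1 - s²) = ∑ c n s^(2n)` gives `arcsin y = ∑ c n y^(2n+1) / (2n+1)`. Inserting this
series for `arcsin (t x) / x` and integrating termwise (every term is nonnegative) leaves the
moments `∫₀¹ x^(2n) arccos x`. The substitution `x = cos θ` and an integration by parts turn
these into `W n / (2n+1)` with the Wallis integral `W n = ∫₀^{π/2} cos^(2n+1)`, and the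
recursions `(2n+2) c (n+1) = (2n+1) c n`, `(2n+3) W (n+1) = (2n+2) W n` give
`(2n+1) c n W n = 1`.
-/

open Real Set MeasureTheory intervalIntegral

/-- The coefficient of `xⁿ` in `(1 - x)^(-1/2)`, equal to `C(2n, n) / 4ⁿ`. -/
noncomputable def invSqrtCoeff (n : ℕ) : ℝ := Ring.choose ((1 / 2 : ℝ) + n - 1) n

theorem hasSum_invSqrtCoeff_mul_pow {x : ℝ} (hx : |x| < 1) :
    HasSum (fun n ↦ invSqrtCoeff n * x ^ n) (1 / √(1 - x)) := by
  have h := (one_div_one_sub_rpow_hasFPowerSeriesOnBall_zero (1 / 2)).hasSum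
    (y := x) (by simpa [enorm_eq_nnnorm, ← NNReal.coe_lt_one] using hx)
  simp only [FormalMultilinearSeries.ofScalars_apply_eq, smul_eq_mul, zero_add] at h
  rw [sqrt_eq_rpow]
  simpa only [invSqrtCoeff, mul_comm] using h

theorem invSqrtCoeff_zero : invSqrtCoeff 0 = 1 := Ring.choose_zero_right _

theorem two_mul_add_two_mul_invSqrtCoeff_succ (n : ℕ) :
    (2 * n + 2) * invSqrtCoeff (n + 1) = (2 * n + 1) * invSqrtCoeff n := by
  -- absorption: `(n + 1) * choose r (n + 1) = r * choose (r - 1) n`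
  have h := Ring.choose_smul_choose ((1 / 2 : ℝ) + (n + 1 : ℕ) - 1) (n := n + 1) (k := 1)
    (by omega)
  simp only [Nat.choose_one_right, Ring.choose_one_right, Nat.add_sub_cancel, nsmul_eq_mul] at h
  unfold invSqrtCoeff
  push_cast at h ⊢
  convert congrArg (2 * ·) h using 1 <;> ring_nf

theorem invSqrtCoeff_nonneg (n : ℕ) : 0 ≤ invSqrtCoeff n := by
  induction n with
  | zero => simp [invSqrtCoeff_zero]
  | succ n ih =>
    have h := two_mul_add_two_mul_invSqrtCoeff_succ n
    nlinarith [h, mul_nonneg (by positivity : (0:ℝ) ≤ 2 * n + 1) ih]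

theorem integral_cos_pow_add_two_zero_pi_div_two (n : ℕ) :
    ∫ x in 0..π / 2, cos x ^ (n + 2) = (n + 1) / (n + 2) * ∫ x in 0..π / 2, cos x ^ n := by
  simp [integral_cos_pow]

theorem two_mul_add_one_mul_invSqrtCoeff_mul_integral_cos_pow (n : ℕ) :
    (2 * n + 1) * invSqrtCoeff n * ∫ x in 0..π / 2, cos x ^ (2 * n + 1) = 1 := by
  induction n with
  | zero => simp [invSqrtCoeff_zero]
  | succ n ih =>
    rw [show 2 * (n + 1) + 1 = 2 * n + 1 + 2 by ring, integral_cos_pow_add_two_zero_pi_div_two]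
    calc _ = (2 * n + 2) * invSqrtCoeff (n + 1) * ∫ x in 0..π / 2, cos x ^ (2 * n + 1) := by
          push_cast; field_simp; ring
      _ = 1 := by rw [two_mul_add_two_mul_invSqrtCoeff_succ, ih]

theorem integral_pow_mul_arccos (k : ℕ) :
    ∫ x in 0..1, x ^ k * arccos x = (∫ θ in 0..π / 2, cos θ ^ (k + 1)) / (k + 1) := by
  have hsubst :
      ∫ x in 0..1, x ^ k * arccos x = ∫ θ in 0..π / 2, θ * (cos θ ^ k * sin θ) := by
    have h := integral_comp_mul_deriv (a := 0) (b := π / 2) (f := cos) (f' := fun θ ↦ -sin θ)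
      (g := fun x ↦ x ^ k * arccos x) (fun θ _ ↦ hasDerivAt_cos θ) (by fun_prop)
      (by fun_prop)
    rw [cos_zero, cos_pi_div_two] at h
    rw [integral_symm, ← h, ← intervalIntegral.integral_neg]
    refine integral_congr fun θ hθ ↦ ?_
    rw [uIcc_of_le pi_div_two_pos.le] at hθ
    simp only [Function.comp_apply, arccos_cos hθ.1 (by linarith [hθ.2, pi_pos])]
    ring
  have hparts := integral_mul_deriv_eq_deriv_mul (a := 0) (b := π / 2)
    (u := fun θ ↦ θ) (u' := fun _ ↦ 1) (v := fun θ ↦ -cos θ ^ (k + 1) / (k + 1))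
    (v' := fun θ ↦ cos θ ^ k * sin θ)
    (fun θ _ ↦ hasDerivAt_id θ) (fun θ _ ↦ ?_) intervalIntegrable_const
    ((by fun_prop : Continuous _).intervalIntegrable _ _)
  · rw [hsubst, hparts]
    simp [cos_pi_div_two, neg_div, intervalIntegral.integral_div]
  · refine (((hasDerivAt_cos θ).pow (k + 1)).neg.div_const ((k : ℝ) + 1)).congr_deriv ?_
    rw [Nat.add_sub_cancel]
    push_cast
    field_simp

theorem hasSum_intervalIntegral_of_nonneg {ι : Type*} [Countable ι] {F : ι → ℝ → ℝ}
    {f : ℝ → ℝ} {a b : ℝ} (hab : a ≤ b) (hF : ∀ i, IntervalIntegrable (F i) volume a b)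
    (hF_nonneg : ∀ i, ∀ x ∈ Ioc a b, 0 ≤ F i x)
    (hf : ∀ x ∈ Ioc a b, HasSum (F · x) (f x))
    (hF_sum : Summable fun i ↦ ∫ x in a..b, F i x) :
    HasSum (fun i ↦ ∫ x in a..b, F i x) (∫ x in a..b, f x) := by
  simp only [integral_of_le hab] at hF_sum ⊢
  have hnorm : ∀ i, ∫ x in Ioc a b, ‖F i x‖ = ∫ x in Ioc a b, F i x := fun i ↦
    setIntegral_congr_fun measurableSet_Ioc fun x hx ↦ norm_of_nonneg (hF_nonneg i x hx)
  have h := hasSum_integral_of_summable_integral_norm (fun i ↦ (hF i).1) (by simpa only [hnorm])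
  rwa [setIntegral_congr_fun measurableSet_Ioc fun x hx ↦ (hf x hx).tsum_eq] at h

theorem integral_one_div_sqrt_one_sub_sq {y : ℝ} (hy : |y| < 1) :
    ∫ s in 0..y, 1 / √(1 - s ^ 2) = arcsin y := by
  have hs : ∀ s ∈ uIcc 0 y, s ^ 2 < 1 := fun s hs ↦ by
    obtain ⟨hy₀, hy₁⟩ := abs_lt.1 hy
    rcases mem_uIcc.1 hs with h | h <;> nlinarith [h.1, h.2]
  rw [integral_eq_sub_of_hasDerivAt (f := arcsin), arcsin_zero, sub_zero]
  · intro s hs'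
    obtain ⟨h₀, h₁⟩ := abs_lt.1 ((sq_lt_one_iff_abs_lt_one s).1 (hs s hs'))
    exact hasDerivAt_arcsin h₀.ne' h₁.ne
  · exact ContinuousOn.intervalIntegrable (continuousOn_const.div (by fun_prop) fun s hs' ↦
      (sqrt_pos.2 (sub_pos.2 (hs s hs'))).ne')

theorem hasSum_arcsin_of_nonneg {y : ℝ} (hy₀ : 0 ≤ y) (hy₁ : y < 1) :
    HasSum (fun n ↦ invSqrtCoeff n / (2 * n + 1) * y ^ (2 * n + 1)) (arcsin y) := by
  have hsq : ∀ s ∈ Icc 0 y, |s ^ 2| < 1 := fun s hs ↦ by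
    rw [abs_of_nonneg (sq_nonneg s)]; nlinarith [hs.1, hs.2]
  have hint : ∀ n : ℕ, ∫ s in 0..y, invSqrtCoeff n * (s ^ 2) ^ n
      = invSqrtCoeff n / (2 * n + 1) * y ^ (2 * n + 1) := fun n ↦ by
    simp only [← pow_mul, intervalIntegral.integral_const_mul, integral_pow]
    push_cast; ring
  rw [← integral_one_div_sqrt_one_sub_sq (abs_lt.2 ⟨by linarith, hy₁⟩)]
  simp_rw [← hint]
  refine hasSum_intervalIntegral_of_nonneg hy₀
    (fun n ↦ (by fun_prop : Continuous _).intervalIntegrable _ _) ?_ ?_ ?_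
  · intro n s hs
    exact mul_nonneg (invSqrtCoeff_nonneg n) (by positivity)
  · intro s hs
    simpa using hasSum_invSqrtCoeff_mul_pow (hsq s (Ioc_subset_Icc_self hs))
  · simp_rw [hint]
    refine Summable.of_nonneg_of_le (fun n ↦ ?_) (fun n ↦ ?_)
      (hasSum_invSqrtCoeff_mul_pow (hsq y ⟨hy₀, le_rfl⟩)).summable
    · exact mul_nonneg (div_nonneg (invSqrtCoeff_nonneg n) (by positivity)) (by positivity)
    · rw [← pow_mul, pow_succ]
      have hc := invSqrtCoeff_nonneg n
      exact mul_le_mul (div_le_self hc (by linarith [n.cast_nonneg (α := ℝ)]))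
        (mul_le_of_le_one_right (by positivity) hy₁.le) (by positivity) hc

theorem hasSum_arcsin {y : ℝ} (hy : |y| < 1) :
    HasSum (fun n ↦ invSqrtCoeff n / (2 * n + 1) * y ^ (2 * n + 1)) (arcsin y) := by
  rcases le_total 0 y with hy₀ | hy₀
  · exact hasSum_arcsin_of_nonneg hy₀ (abs_lt.1 hy).2
  · have h := (hasSum_arcsin_of_nonneg (neg_nonneg.2 hy₀) (by linarith [(abs_lt.1 hy).1])).neg
    simpa [arcsin_neg, Odd.neg_pow ⟨_, rfl⟩] using h

theorem hasSum_arcsin_mul_div {y x : ℝ} (hyx : |y * x| < 1) (hx : x ≠ 0) :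
    HasSum (fun n ↦ invSqrtCoeff n / (2 * n + 1) * y ^ (2 * n + 1) * x ^ (2 * n))
      (arcsin (y * x) / x) := by
  have hterm : (fun n : ℕ ↦ invSqrtCoeff n / (2 * n + 1) * y ^ (2 * n + 1) * x ^ (2 * n)) =
      fun n ↦ invSqrtCoeff n / (2 * n + 1) * (y * x) ^ (2 * n + 1) / x := by
    funext n
    field_simp
    ring
  rw [hterm]
  exact (hasSum_arcsin hyx).div_const x

theorem summable_pow_div_two_mul_add_one_pow_three {t : ℝ} (ht₀ : 0 ≤ t) (ht₁ : t ≤ 1) :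
    Summable fun n : ℕ ↦ t ^ (2 * n + 1) / (2 * n + 1 : ℝ) ^ 3 := by
  have h := (summable_nat_pow_inv.2 (by norm_num : 1 < 3)).comp_injective
    (show Function.Injective fun n : ℕ ↦ 2 * n + 1 by intro m n h; simp only at h; omega)
  refine h.of_nonneg_of_le (fun n ↦ by positivity) fun n ↦ ?_
  simp only [Function.comp_apply, Nat.cast_add, Nat.cast_mul, Nat.cast_ofNat, Nat.cast_one,
    ← one_div]
  gcongr
  exact pow_le_one₀ ht₀ ht₁

open Real in
theorem odd_cubes_sum_eq_integral (t : ℝ) (ht0 : 0 ≤ t) (ht1 : t ≤ 1) :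
    ∑' n : ℕ, t ^ (2 * n + 1) / (2 * n + 1 : ℝ) ^ 3 =
      ∫ x in (0:ℝ)..1, arcsin (t * x) * arccos x / x := by
  set F : ℕ → ℝ → ℝ := fun n x ↦
    invSqrtCoeff n / (2 * n + 1) * t ^ (2 * n + 1) * x ^ (2 * n) * arccos x
  have hF_integral (n : ℕ) : ∫ x in 0..1, F n x = t ^ (2 * n + 1) / (2 * n + 1 : ℝ) ^ 3 := by
    have h := two_mul_add_one_mul_invSqrtCoeff_mul_integral_cos_pow n
    simp only [F, mul_assoc, intervalIntegral.integral_const_mul, integral_pow_mul_arccos]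
    push_cast
    field_simp
    linear_combination t ^ (2 * n + 1) * h
  have hF_hasSum (x : ℝ) (hx : x ∈ Ioc 0 1) :
      HasSum (F · x) (arcsin (t * x) * arccos x / x) := by
    rcases hx.2.eq_or_lt with rfl | hx₁
    -- `t * 1` may lie on the boundary of the disc of convergence, but `arccos 1 = 0`
    · simp [F, arccos_one]
    have htx : |t * x| < 1 := by rw [abs_of_nonneg (by nlinarith [hx.1])]; nlinarith [hx.1]
    rw [mul_div_right_comm]
    exact (hasSum_arcsin_mul_div htx hx.1.ne').mul_right (arccos x)
  have hF_nonneg (n : ℕ) (x : ℝ) (hx : x ∈ Ioc 0 1) : 0 ≤ F n x := by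
    have := invSqrtCoeff_nonneg n
    have := arccos_nonneg x
    have := hx.1.le
    positivity
  rw [← (hasSum_intervalIntegral_of_nonneg zero_le_one
    (fun n ↦ (by fun_prop : Continuous (F n)).intervalIntegrable _ _) hF_nonneg hF_hasSum
    (by simpa only [hF_integral] using summable_pow_div_two_mul_add_one_pow_three ht0 ht1)).tsum_eq]
  simp only [hF_integral]
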